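/- arXiv:2406.12610 — 2 statements merged into one kernel-verified Lean document; each statement's English description precedes it below -/
import Mathlib

section
/- For all d ≥ 0: if n ≤ d+2 then the number of d-ascent sequences of length n equals n!, and the number of d-ascent sequences of length d+3 equals (d+3)! − d!. -/
/-- Entry of the word `w` at (1-based) position `i`. -/
def ent (w : List ℕ) (i : ℕ) : ℕ := w.getD (i - 1) 0

/-- `w` is an endofunction of `{1,…,n}`, where `n = w.length`. -/
def IsEndo (w : List ℕ) : Prop := ∀ x ∈ w, 1 ≤ x ∧ x ≤ w.length

/-- `w` is an inversion sequence. -/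
def IsInvSeq (w : List ℕ) : Prop :=
  ∀ i ∈ Finset.Icc 1 w.length, 1 ≤ ent w i ∧ ent w i ≤ i

/-- The set of `d`-ascents of `w` (1-based positions): position `1` is always a
`d`-ascent, and `i ≥ 2` is a `d`-ascent if `a_i > a_{i-1} - d`. -/
def ascSet (d : ℕ) (w : List ℕ) : Finset ℕ :=
  (Finset.Icc 1 w.length).filter fun i => i = 1 ∨ ent w (i - 1) < ent w i + d

/-- The number of `d`-ascents of `w`. -/
def ascCard (d : ℕ) (w : List ℕ) : ℕ := (ascSet d w).card

/-- `w` is a `d`-ascent sequence. -/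
def IsDAscSeq (d : ℕ) (w : List ℕ) : Prop :=
  IsEndo w ∧ ∀ i ∈ Finset.Icc 1 w.length, ent w i ≤ 1 + ascCard d (w.take (i - 1))

/-- One step of the map `M`: add one to every entry strictly to the left of
position `j` that is weakly larger than the entry in position `j`. -/
def Mstep (w : List ℕ) (j : ℕ) : List ℕ :=
  w.mapIdx fun k x => if k + 1 < j ∧ ent w j ≤ x then x + 1 else x

/-- The `d`-hat map: apply `Mstep` successively at the `d`-ascents of `w`,
listed in increasing order. -/
def hatd (d : ℕ) (w : List ℕ) : List ℕ :=
  ((ascSet d w).sort (· ≤ ·)).foldl Mstep w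

/-- Largest entry of `w`. -/
def maxEnt (w : List ℕ) : ℕ := w.foldr max 0

/-- `w` is a Cayley permutation: its image is `{1,…,max w}`. -/
def IsCayley (w : List ℕ) : Prop := ∀ x, x ∈ w ↔ (1 ≤ x ∧ x ≤ maxEnt w)

open Classical in
/-- The set of positions of leftmost copies of the values of `w`. -/
noncomputable def nubSet (w : List ℕ) : Finset ℕ :=
  (Finset.Icc 1 w.length).filter fun i =>
    ∀ j ∈ Finset.Icc 1 w.length, ent w j = ent w i → i ≤ j

/-- The least `d` such that `w` is a `d`-ascent sequence. -/
noncomputable def mind (w : List ℕ) : ℕ := sInf {d | IsDAscSeq d w}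

/-- The set `H(w)` of all the (meaningful) `d`-hats of `w`. -/
def Hset (w : List ℕ) : Set (List ℕ) := {x | ∃ d, mind w ≤ d ∧ x = hatd d w}

/-- The max-hat map. -/
def hatmax (w : List ℕ) : List ℕ := hatd (w.length - 1) w

/-- Weak descent set of `w`. -/
def wDesSet (w : List ℕ) : Finset ℕ :=
  (Finset.Icc 2 w.length).filter fun i => ent w i ≤ ent w (i - 1)

/-- The number of weak descents of `w`. -/
def wdes (w : List ℕ) : ℕ := (wDesSet w).card

/-- `i` is a right-left minimum index of `w`. -/
def IsRLMinIdx (w : List ℕ) (i : ℕ) : Prop :=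
  1 ≤ i ∧ i ≤ w.length ∧ ∀ j, i < j → j ≤ w.length → ent w i < ent w j

/-- The set of right-left minima pairs of `w`. -/
def rlMinP (w : List ℕ) : Set (ℕ × ℕ) :=
  {p | IsRLMinIdx w p.1 ∧ p.2 = ent w p.1}

/-- `w` is the word of a permutation of `{1,…,n}`, where `n = w.length`. -/
def IsPermWord (w : List ℕ) : Prop :=
  w.Nodup ∧ ∀ x ∈ w, 1 ≤ x ∧ x ≤ w.length

/-- Add one to every entry of `w` that is `≥ a`. -/
def plus (w : List ℕ) (a : ℕ) : List ℕ :=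
  w.map fun x => if a ≤ x then x + 1 else x

/-- Add one to every entry of `w` that is `≥ a`, then append `a` at the end. -/
def plusApp (w : List ℕ) (a : ℕ) : List ℕ := plus w a ++ [a]

/-- The index of the maximal increasing run of `w` containing position `i`:
one plus the number of descents up to position `i`. -/
def irIdx (w : List ℕ) (i : ℕ) : ℕ :=
  1 + ((Finset.Icc 2 i).filter fun j => ent w j < ent w (j - 1)).card

/-- `w` is ir-subdiagonal: every entry `c` in the `i`th maximal increasing run
satisfies `c ≤ n + 1 - i`. -/
def IsIrSub (w : List ℕ) : Prop :=
  ∀ i ∈ Finset.Icc 1 w.length, ent w i + irIdx w i ≤ w.length + 1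

/-- The index of the maximal decreasing run of `w` containing position `i`. -/
def drIdx (w : List ℕ) (i : ℕ) : ℕ :=
  1 + ((Finset.Icc 2 i).filter fun j => ent w (j - 1) < ent w j).card

/-- `w` is dr-subdiagonal: every entry `c` in the `i`th maximal decreasing run
satisfies `c ≤ n + 1 - i`. -/
def IsDrSub (w : List ℕ) : Prop :=
  ∀ i ∈ Finset.Icc 1 w.length, ent w i + drIdx w i ≤ w.length + 1

/-- `w` is a weak descent sequence. -/
def IsWDesSeq (w : List ℕ) : Prop :=
  IsInvSeq w ∧ ∀ i ∈ Finset.Icc 1 w.length, ent w i ≤ 1 + wdes (w.take (i - 1))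

/-- `w` is a primitive ascent sequence: an ascent sequence with no flat steps. -/
def IsPrimAscSeq (w : List ℕ) : Prop :=
  IsDAscSeq 0 w ∧ ∀ i ∈ Finset.Icc 1 (w.length - 1), ent w i ≠ ent w (i + 1)

/-- Insert position `i` into a list of positions sorted by the Burge order:
ascending entries, ties broken by descending position. -/
def bInsert (w : List ℕ) (i : ℕ) : List ℕ → List ℕ
  | [] => [i]
  | j :: t =>
      if ent w i < ent w j ∨ (ent w i = ent w j ∧ j ≤ i) then i :: j :: t
      else j :: bInsert w i t

/-- The permutation `burget w` obtained from the Burge transpose of the biword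
with top row `1,…,n` and bottom row `w`: sort the positions `1,…,n` in
ascending order of their entries, breaking ties in descending order of
position. -/
def burget (w : List ℕ) : List ℕ :=
  ((List.range w.length).map (· + 1)).foldr (bInsert w) []

section Stmt1Aux

lemma ent_succ (w : List ℕ) (j : ℕ) (h : j < w.length) : ent w (j + 1) = w[j] :=
  List.getD_eq_getElem w 0 h

lemma ascCard_le (d : ℕ) (w : List ℕ) : ascCard d w ≤ w.length := by
  have h := Finset.card_filter_le (Finset.Icc 1 w.length)
      (fun i => i = 1 ∨ ent w (i - 1) < ent w i + d)
  simp only [Nat.card_Icc] at h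
  unfold ascCard ascSet
  omega

lemma ent_mem (w : List ℕ) {i : ℕ} (h1 : 1 ≤ i) (h2 : i ≤ w.length) : ent w i ∈ w := by
  rw [show i = (i - 1) + 1 by omega, ent_succ w (i-1) (by omega)]
  exact List.getElem_mem _

lemma ent_take (w : List ℕ) {m i : ℕ} (h1 : 1 ≤ i) (h2 : i ≤ m) :
    ent (w.take m) i = ent w i := by
  unfold ent
  rw [List.getD_eq_getElem?_getD, List.getD_eq_getElem?_getD,
    List.getElem?_take_of_lt (show i - 1 < m by omega)]

lemma isInvSeq_take {w : List ℕ} (h : IsInvSeq w) (m : ℕ) : IsInvSeq (w.take m) := by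
  intro i hi
  simp only [Finset.mem_Icc, List.length_take] at hi
  rw [ent_take w hi.1 (le_trans hi.2 (min_le_left _ _))]
  exact h i (Finset.mem_Icc.mpr ⟨hi.1, le_trans hi.2 (min_le_right _ _)⟩)

lemma ascCard_small {d : ℕ} {w : List ℕ} (h : IsInvSeq w) (hlen : w.length ≤ d + 1) :
    ascCard d w = w.length := by
  unfold ascCard ascSet
  rw [Finset.filter_true_of_mem, Nat.card_Icc]
  · omega
  · intro i hi
    simp only [Finset.mem_Icc] at hi
    by_cases h1 : i = 1
    · exact Or.inl h1
    · right
      have e1 := h (i - 1) (Finset.mem_Icc.mpr ⟨by omega, by omega⟩)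
      have e2 := h i (Finset.mem_Icc.mpr ⟨hi.1, hi.2⟩)
      omega

lemma ascCard_mid {d : ℕ} {w : List ℕ} (h : IsInvSeq w) (hlen : w.length = d + 2) :
    ascCard d w = if ent w (d+1) = d+1 ∧ ent w (d+2) = 1 then d+1 else d+2 := by
  have e1 := h (d+1) (Finset.mem_Icc.mpr ⟨by omega, by omega⟩)
  have e2 := h (d+2) (Finset.mem_Icc.mpr ⟨by omega, by omega⟩)
  unfold ascCard ascSet
  by_cases hb : ent w (d+1) = d+1 ∧ ent w (d+2) = 1
  · rw [if_pos hb]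
    have key : (Finset.Icc 1 w.length).filter
        (fun i => i = 1 ∨ ent w (i - 1) < ent w i + d) = Finset.Icc 1 (d+1) := by
      ext i
      simp only [Finset.mem_filter, Finset.mem_Icc, hlen]
      constructor
      · rintro ⟨⟨hi1, hi2⟩, hc⟩
        refine ⟨hi1, ?_⟩
        by_contra hcon
        have hi' : i = d + 2 := by omega
        subst hi'
        rw [show d + 2 - 1 = d + 1 by omega] at hc
        omega
      · rintro ⟨hi1, hi2⟩
        refine ⟨⟨hi1, by omega⟩, ?_⟩
        by_cases h1 : i = 1
        · exact Or.inl h1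
        · right
          have f1 := h (i - 1) (Finset.mem_Icc.mpr ⟨by omega, by omega⟩)
          have f2 := h i (Finset.mem_Icc.mpr ⟨hi1, by omega⟩)
          omega
    rw [key, Nat.card_Icc]
    omega
  · rw [if_neg hb]
    have key : (Finset.Icc 1 w.length).filter
        (fun i => i = 1 ∨ ent w (i - 1) < ent w i + d) = Finset.Icc 1 w.length := by
      apply Finset.filter_true_of_mem
      intro i hi
      simp only [Finset.mem_Icc, hlen] at hi
      by_cases h1 : i = 1
      · exact Or.inl h1
      · right
        by_cases h2 : i = d + 2
        · subst h2
          rw [show d + 2 - 1 = d + 1 by omega]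
          omega
        · have f1 := h (i - 1) (Finset.mem_Icc.mpr ⟨by omega, by omega⟩)
          have f2 := h i (Finset.mem_Icc.mpr ⟨hi.1, by omega⟩)
          omega
    rw [key, Nat.card_Icc, hlen]
    omega

lemma isInvSeq_of_dasc {d : ℕ} {w : List ℕ} (h : IsDAscSeq d w) : IsInvSeq w := by
  intro i hi
  simp only [Finset.mem_Icc] at hi
  refine ⟨(h.1 _ (ent_mem w hi.1 hi.2)).1, ?_⟩
  have h2 := h.2 i (Finset.mem_Icc.mpr hi)
  have h3 := ascCard_le d (w.take (i - 1))
  rw [List.length_take] at h3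
  omega

lemma dasc_iff_small {d n : ℕ} {w : List ℕ} (hlen : w.length = n) (hn : n ≤ d + 2) :
    IsDAscSeq d w ↔ IsInvSeq w := by
  constructor
  · exact isInvSeq_of_dasc
  · intro h
    constructor
    · intro x hx
      obtain ⟨j, hj, rfl⟩ := List.getElem_of_mem hx
      have hh := h (j+1) (Finset.mem_Icc.mpr ⟨by omega, by omega⟩)
      rw [ent_succ w j hj] at hh
      exact ⟨hh.1, by omega⟩
    · intro i hi
      simp only [Finset.mem_Icc] at hi
      have h2 := h i (Finset.mem_Icc.mpr hi)
      have h3 : ascCard d (w.take (i-1)) = (w.take (i-1)).length :=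
        ascCard_small (isInvSeq_take h _) (by rw [List.length_take]; omega)
      rw [List.length_take] at h3
      omega

lemma dasc_iff_big {d : ℕ} {w : List ℕ} (hlen : w.length = d + 3) :
    IsDAscSeq d w ↔ IsInvSeq w ∧
      ¬(ent w (d+1) = d+1 ∧ ent w (d+2) = 1 ∧ ent w (d+3) = d+3) := by
  constructor
  · intro h
    refine ⟨isInvSeq_of_dasc h, ?_⟩
    rintro ⟨b1, b2, b3⟩
    have hinv := isInvSeq_of_dasc h
    have h2 := h.2 (d+3) (Finset.mem_Icc.mpr ⟨by omega, by omega⟩)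
    have ht : (w.take (d+3-1)).length = d + 2 := by rw [List.length_take]; omega
    have h3 := ascCard_mid (isInvSeq_take hinv (d+3-1)) ht
    rw [ent_take w (by omega) (by omega), ent_take w (by omega) (by omega)] at h3
    rw [if_pos ⟨b1, b2⟩] at h3
    omega
  · rintro ⟨hinv, hbad⟩
    constructor
    · intro x hx
      obtain ⟨j, hj, rfl⟩ := List.getElem_of_mem hx
      have hh := hinv (j+1) (Finset.mem_Icc.mpr ⟨by omega, by omega⟩)
      rw [ent_succ w j hj] at hh
      exact ⟨hh.1, by omega⟩
    · intro i hi
      simp only [Finset.mem_Icc, hlen] at hi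
      have he := hinv i (Finset.mem_Icc.mpr ⟨hi.1, by omega⟩)
      by_cases hc : i ≤ d + 2
      · have h3 : ascCard d (w.take (i-1)) = (w.take (i-1)).length :=
          ascCard_small (isInvSeq_take hinv _) (by rw [List.length_take]; omega)
        rw [List.length_take] at h3
        omega
      · have hi3 : i = d + 3 := by omega
        subst hi3
        have ht : (w.take (d+3-1)).length = d + 2 := by rw [List.length_take]; omega
        have h3 := ascCard_mid (isInvSeq_take hinv (d+3-1)) ht
        rw [ent_take w (by omega) (by omega), ent_take w (by omega) (by omega)] at h3
        by_cases hb : ent w (d+1) = d+1 ∧ ent w (d+2) = 1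
        · rw [if_pos hb] at h3
          have hne : ent w (d+3) ≠ d + 3 := fun hc3 => hbad ⟨hb.1, hb.2, hc3⟩
          omega
        · rw [if_neg hb] at h3
          omega

lemma ent_ofFn {n : ℕ} (g : Fin n → ℕ) {i : ℕ} (h1 : 1 ≤ i) (h2 : i ≤ n) :
    ent (List.ofFn g) i = g ⟨i - 1, by omega⟩ := by
  unfold ent
  rw [List.getD_eq_getElem _ _ (by simp only [List.length_ofFn]; omega), List.getElem_ofFn]

noncomputable def invEquiv (n : ℕ) :
    {w : List ℕ // w.length = n ∧ IsInvSeq w} ≃ (∀ i : Fin n, Fin ((i : ℕ) + 1)) where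
  toFun w i := ⟨ent w.1 ((i : ℕ) + 1) - 1, by
    have hh := w.2.2 ((i : ℕ) + 1) (Finset.mem_Icc.mpr ⟨by omega, by rw [w.2.1]; omega⟩)
    omega⟩
  invFun f := ⟨List.ofFn (fun i => (f i : ℕ) + 1), by simp, by
    have key : ∀ (j : Fin n), ent (List.ofFn fun i => (f i : ℕ) + 1) ((j : ℕ) + 1)
        = (f j : ℕ) + 1 := by
      intro j
      rw [ent_succ _ (j : ℕ) (by simp), List.getElem_ofFn]
    intro i hi
    simp only [Finset.mem_Icc, List.length_ofFn] at hi
    set j : Fin n := ⟨i - 1, by omega⟩ with hj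
    have hjv : (j : ℕ) = i - 1 := by rw [hj]
    have hkey := key j
    have hle : (f j : ℕ) ≤ (j : ℕ) := Fin.is_le (f j)
    rw [show i = (j : ℕ) + 1 by omega, hkey]
    omega⟩
  left_inv := by
    rintro ⟨w, hl, hinv⟩
    apply Subtype.ext
    apply List.ext_getElem
    · simp [hl]
    · intro j h1 h2
      have h2' : j < w.length := h2
      simp only [List.getElem_ofFn]
      show ent w (j + 1) - 1 + 1 = w[j]'h2'
      clear h1 h2
      have hmem : j + 1 ∈ Finset.Icc 1 w.length := by
        rw [Finset.mem_Icc]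
        omega
      have hh := hinv (j+1) hmem
      rw [ent_succ w j h2'] at hh
      rw [ent_succ w j h2']
      omega
  right_inv := by
    intro f
    funext i
    apply Fin.ext
    show ent (List.ofFn fun i => (f i : ℕ) + 1) ((i : ℕ) + 1) - 1 = (f i : ℕ)
    rw [ent_succ _ (i : ℕ) (by simp), List.getElem_ofFn]
    simp

lemma card_inv (n : ℕ) :
    Nat.card {w : List ℕ // w.length = n ∧ IsInvSeq w} = Nat.factorial n := by
  rw [Nat.card_congr (invEquiv n), Nat.card_pi]
  calc ∏ i : Fin n, Nat.card (Fin ((i : ℕ) + 1))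
      = ∏ i : Fin n, ((i : ℕ) + 1) := by
        refine Finset.prod_congr rfl fun i _ => ?_
        rw [Nat.card_eq_fintype_card, Fintype.card_fin]
    _ = ∏ i ∈ Finset.range n, (i + 1) := Fin.prod_univ_eq_prod_range _ n
    _ = Nat.factorial n := Finset.prod_range_add_one_eq_factorial n

lemma ent_append_left (u v : List ℕ) {i : ℕ} (h1 : 1 ≤ i) (h2 : i ≤ u.length) :
    ent (u ++ v) i = ent u i := by
  rw [show i = (i - 1) + 1 by omega, ent_succ (u ++ v) (i-1)
      (by rw [List.length_append]; omega), ent_succ u (i-1) (by omega),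
    List.getElem_append_left (by omega)]

lemma ent_append_right (u v : List ℕ) (k : ℕ) (h : k < v.length) :
    ent (u ++ v) (u.length + k + 1) = v[k] := by
  rw [ent_succ (u ++ v) (u.length + k) (by rw [List.length_append]; omega),
    List.getElem_append_right (by omega)]
  congr 1
  omega

lemma ent_append3 (u : List ℕ) (a b c : ℕ) :
    ent (u ++ [a, b, c]) (u.length + 1) = a ∧
    ent (u ++ [a, b, c]) (u.length + 2) = b ∧
    ent (u ++ [a, b, c]) (u.length + 3) = c := by
  refine ⟨?_, ?_, ?_⟩
  · have h := ent_append_right u [a, b, c] 0 (by simp)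
    simpa using h
  · have h := ent_append_right u [a, b, c] 1 (by simp)
    rw [show u.length + 1 + 1 = u.length + 2 by omega] at h
    simpa using h
  · have h := ent_append_right u [a, b, c] 2 (by simp)
    rw [show u.length + 2 + 1 = u.length + 3 by omega] at h
    simpa using h

noncomputable def badEquiv (d : ℕ) :
    {w : List ℕ // (w.length = d + 3 ∧ IsInvSeq w) ∧
      (ent w (d+1) = d+1 ∧ ent w (d+2) = 1 ∧ ent w (d+3) = d+3)} ≃
    {w : List ℕ // w.length = d ∧ IsInvSeq w} where
  toFun w := ⟨w.1.take d, by rw [List.length_take, w.2.1.1]; omega,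
    isInvSeq_take w.2.1.2 d⟩
  invFun u := ⟨u.1 ++ [d+1, 1, d+3], by
    have hu := u.2.1
    have h3 := ent_append3 u.1 (d+1) 1 (d+3)
    rw [hu] at h3
    have hlen2 : (u.1 ++ [d+1, 1, d+3]).length = d + 3 := by
      rw [List.length_append, hu]; rfl
    refine ⟨⟨hlen2, ?_⟩, h3.1, h3.2.1, h3.2.2⟩
    intro i hi
    rw [Finset.mem_Icc, hlen2] at hi
    by_cases hle : i ≤ d
    · rw [ent_append_left u.1 _ hi.1 (by omega)]
      exact u.2.2 i (Finset.mem_Icc.mpr ⟨hi.1, by omega⟩)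
    · have hcase : i = d + 1 ∨ i = d + 2 ∨ i = d + 3 := by omega
      rcases hcase with rfl | rfl | rfl
      · rw [h3.1]; omega
      · rw [h3.2.1]; omega
      · rw [h3.2.2]; omega⟩
  left_inv := by
    rintro ⟨w, ⟨⟨hl, hinv⟩, b1, b2, b3⟩⟩
    apply Subtype.ext
    show w.take d ++ [d+1, 1, d+3] = w
    conv_rhs => rw [← List.take_append_drop d w]
    congr 1
    have hb1 : w[d]'(by omega) = d + 1 := by rw [← ent_succ w d (by omega)]; exact b1
    have hb2 : w[d+1]'(by omega) = 1 := by rw [← ent_succ w (d+1) (by omega)]; exact b2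
    have hb3 : w[d+2]'(by omega) = d + 3 := by rw [← ent_succ w (d+2) (by omega)]; exact b3
    apply List.ext_getElem (by simp [hl]; try omega)
    intro j hj1 hj2
    rw [List.getElem_drop]
    have hj3 : j < 3 := by simpa using hj1
    interval_cases j
    · simpa using hb1.symm
    · simpa using hb2.symm
    · simpa using hb3.symm
  right_inv := by
    intro u
    apply Subtype.ext
    exact List.take_left' u.2.1

lemma card_split (P Q : List ℕ → Prop) (hf : Finite {w : List ℕ // P w}) :
    Nat.card {w : List ℕ // P w} =
      Nat.card {w : List ℕ // P w ∧ Q w} + Nat.card {w : List ℕ // P w ∧ ¬ Q w} := by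
  classical
  haveI := hf
  have e1 : {x : {w : List ℕ // P w} // Q x.1} ≃ {w : List ℕ // P w ∧ Q w} :=
    Equiv.subtypeSubtypeEquivSubtypeInter P Q
  have e2 : {x : {w : List ℕ // P w} // ¬ Q x.1} ≃ {w : List ℕ // P w ∧ ¬ Q w} :=
    Equiv.subtypeSubtypeEquivSubtypeInter P (fun w => ¬ Q w)
  have e3 := Equiv.sumCompl (fun x : {w : List ℕ // P w} => Q x.1)
  have hc := Nat.card_congr e3
  rw [Nat.card_sum] at hc
  rw [← hc, Nat.card_congr e1, Nat.card_congr e2]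

end Stmt1Aux

/-- for all `d ≥ 0`, if `n ≤ d + 2` then `#A_{d,n} = n!`, and
`#A_{d,d+3} = (d+3)! - d!`. -/
theorem stmt1 (d : ℕ) :
    (∀ n : ℕ, n ≤ d + 2 →
      Nat.card {w : List ℕ // w.length = n ∧ IsDAscSeq d w} = Nat.factorial n) ∧
    Nat.card {w : List ℕ // w.length = d + 3 ∧ IsDAscSeq d w}
      = Nat.factorial (d + 3) - Nat.factorial d := by
  classical
  constructor
  · intro n hn
    have e : {w : List ℕ // w.length = n ∧ IsDAscSeq d w} ≃
        {w : List ℕ // w.length = n ∧ IsInvSeq w} :=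
      Equiv.subtypeEquivRight (fun w => by
        constructor
        · rintro ⟨hl, hd⟩; exact ⟨hl, (dasc_iff_small hl hn).mp hd⟩
        · rintro ⟨hl, hi⟩; exact ⟨hl, (dasc_iff_small hl hn).mpr hi⟩)
    rw [Nat.card_congr e, card_inv]
  · have e : {w : List ℕ // w.length = d + 3 ∧ IsDAscSeq d w} ≃
        {w : List ℕ // (w.length = d + 3 ∧ IsInvSeq w) ∧
          ¬(ent w (d+1) = d+1 ∧ ent w (d+2) = 1 ∧ ent w (d+3) = d+3)} :=
      Equiv.subtypeEquivRight (fun w => by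
        constructor
        · rintro ⟨hl, hd⟩
          have hh := (dasc_iff_big hl).mp hd
          exact ⟨⟨hl, hh.1⟩, hh.2⟩
        · rintro ⟨⟨hl, hi⟩, hb⟩
          exact ⟨hl, (dasc_iff_big hl).mpr ⟨hi, hb⟩⟩)
    rw [Nat.card_congr e]
    have hfin : Finite {w : List ℕ // w.length = d + 3 ∧ IsInvSeq w} :=
      Finite.of_equiv _ (invEquiv (d+3)).symm
    have hs := card_split (fun w => w.length = d + 3 ∧ IsInvSeq w)
      (fun w => ent w (d+1) = d+1 ∧ ent w (d+2) = 1 ∧ ent w (d+3) = d+3) hfin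
    have h1 : Nat.card {w : List ℕ // (w.length = d + 3 ∧ IsInvSeq w) ∧
        (ent w (d+1) = d+1 ∧ ent w (d+2) = 1 ∧ ent w (d+3) = d+3)} = Nat.factorial d := by
      rw [Nat.card_congr (badEquiv d), card_inv]
    have hs' : Nat.card {w : List ℕ // w.length = d + 3 ∧ IsInvSeq w}
        = Nat.card {w : List ℕ // (w.length = d + 3 ∧ IsInvSeq w) ∧
            (ent w (d+1) = d+1 ∧ ent w (d+2) = 1 ∧ ent w (d+3) = d+3)}
          + Nat.card {w : List ℕ // (w.length = d + 3 ∧ IsInvSeq w) ∧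
            ¬(ent w (d+1) = d+1 ∧ ent w (d+2) = 1 ∧ ent w (d+3) = d+3)} := hs
    have h2 := card_inv (d + 3)
    have hge : Nat.factorial d ≤ Nat.factorial (d + 3) := Nat.factorial_le (by omega)
    omega
end

section
/- For every d ≥ 0 and every d-ascent sequence α, Asc_d(hat_d(α)) ⊆ Asc_d(α). -/
lemma length_Mstep (w : List ℕ) (j : ℕ) : (Mstep w j).length = w.length := by
  simp [Mstep]

lemma ent_eq_getElem? (w : List ℕ) (i : ℕ) : ent w i = (w[i-1]?).getD 0 := by
  simp [ent, List.getD_eq_getElem?_getD]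

lemma ent_Mstep (w : List ℕ) (j i : ℕ) :
    ent (Mstep w j) i =
      ((w[i-1]?).map fun x => if (i-1) + 1 < j ∧ ent w j ≤ x then x + 1 else x).getD 0 := by
  rw [ent_eq_getElem?, Mstep, List.getElem?_mapIdx]

lemma ent_le_ent_Mstep (w : List ℕ) (j i : ℕ) : ent w i ≤ ent (Mstep w j) i := by
  rw [ent_Mstep, ent_eq_getElem?]
  cases h : w[i-1]? with
  | none => simp
  | some x => simp only [Option.map_some, Option.getD_some]; split <;> omega

lemma gap_Mstep (w : List ℕ) (j d i : ℕ) (hi : 2 ≤ i)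
    (h : ent w i + d ≤ ent w (i-1)) :
    ent (Mstep w j) i + d ≤ ent (Mstep w j) (i-1) := by
  cases hb : w[i-1]? with
  | none =>
      have h0 : ent (Mstep w j) i = 0 := by simp [ent_Mstep, hb]
      have h1 : ent w i = 0 := by simp [ent_eq_getElem?, hb]
      have := ent_le_ent_Mstep w j (i-1)
      omega
  | some b =>
      have hlen : i - 1 < w.length := by
        by_contra hc
        rw [List.getElem?_eq_none (by omega)] at hb
        simp at hb
      have ha : ∃ a, w[i-2]? = some a := ⟨w[i-2]'(by omega), List.getElem?_eq_getElem _⟩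
      obtain ⟨a, ha⟩ := ha
      have hwb : ent w i = b := by simp [ent_eq_getElem?, hb]
      have hwa : ent w (i-1) = a := by
        have : i - 1 - 1 = i - 2 := by omega
        simp [ent_eq_getElem?, this, ha]
      have e1 : ent (Mstep w j) i = if (i-1)+1 < j ∧ ent w j ≤ b then b + 1 else b := by
        simp [ent_Mstep, hb]
      have e2 : ent (Mstep w j) (i-1) = if (i-1-1)+1 < j ∧ ent w j ≤ a then a + 1 else a := by
        have h2 : i - 1 - 1 = i - 2 := by omega
        simp only [ent_Mstep, h2, ha, Option.map_some, Option.getD_some]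
      rw [e1, e2]
      split <;> split <;> omega

lemma gap_foldl (L : List ℕ) (w : List ℕ) (d i : ℕ) (hi : 2 ≤ i)
    (h : ent w i + d ≤ ent w (i-1)) :
    ent (L.foldl Mstep w) i + d ≤ ent (L.foldl Mstep w) (i-1) := by
  induction L generalizing w with
  | nil => exact h
  | cons j t ih => exact ih (Mstep w j) (gap_Mstep w j d i hi h)

lemma length_foldl_Mstep (L : List ℕ) (w : List ℕ) :
    (L.foldl Mstep w).length = w.length := by
  induction L generalizing w with
  | nil => rfl
  | cons j t ih => rw [List.foldl_cons, ih, length_Mstep]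

lemma length_hatd (d : ℕ) (w : List ℕ) : (hatd d w).length = w.length :=
  length_foldl_Mstep _ _

/-- for every `d ≥ 0` and every `d`-ascent sequence `α`,
`Asc_d(hat_d(α)) ⊆ Asc_d(α)`. -/
theorem stmt5 (d : ℕ) (w : List ℕ) (hw : IsDAscSeq d w) :
    ascSet d (hatd d w) ⊆ ascSet d w := by
  intro i hi
  simp only [ascSet, Finset.mem_filter, Finset.mem_Icc, length_hatd] at hi ⊢
  obtain ⟨⟨h1, h2⟩, h3⟩ := hi
  refine ⟨⟨h1, h2⟩, ?_⟩
  rcases h3 with h3 | h3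
  · exact Or.inl h3
  · by_contra hc
    push_neg at hc
    obtain ⟨hne, hge⟩ := hc
    have hi2 : 2 ≤ i := by omega
    have := gap_foldl ((ascSet d w).sort (· ≤ ·)) w d i hi2 hge
    rw [show ((ascSet d w).sort (· ≤ ·)).foldl Mstep w = hatd d w from rfl] at this
    omega
end
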